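/- arXiv:math/0604419 — 7 statements merged into one kernel-verified Lean document; each statement's English description precedes it below -/
import Mathlib

section
/- Let f : ℝ → ℝ be a C¹ function with f(x) > 0 for all x, let h, c ∈ ℝ, and let t, σ : ℝ → ℝ be differentiable functions satisfying, for all s, the equations t'(s) = cos σ(s) and σ'(s) = h − (f'(t(s))/f(t(s)))·sin σ(s). Then the function s ↦ f(t(s))·sin σ(s) − h·∫_{c}^{t(s)} f(ξ) dξ is constant on ℝ. -/
open Real MeasureTheory intervalIntegral

/-- Along the system the `f'(t)` terms in the derivative of `f(t) sin σ` cancel, leaving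
`h f(t) cos σ`, which is the derivative of `h ∫_c^t f`. -/
theorem hasDerivAt_firstIntegral_eq_zero {f : ℝ → ℝ} (hf : Differentiable ℝ f) {h c : ℝ}
    {t σ : ℝ → ℝ} {s : ℝ} (hfs : f (t s) ≠ 0) (ht : HasDerivAt t (cos (σ s)) s)
    (hσ : HasDerivAt σ (h - (deriv f (t s) / f (t s)) * sin (σ s)) s) :
    HasDerivAt (fun s => f (t s) * sin (σ s) - h * ∫ ξ in c..(t s), f ξ) 0 s := by
  have hft : HasDerivAt (fun s => f (t s)) (deriv f (t s) * cos (σ s)) s :=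
    (hf (t s)).hasDerivAt.comp s ht
  have hint : HasDerivAt (fun s => ∫ ξ in c..(t s), f ξ) (f (t s) * cos (σ s)) s :=
    (hf.continuous.integral_hasStrictDerivAt c (t s)).hasDerivAt.comp s ht
  refine ((hft.mul hσ.sin).sub (hint.const_mul h)).congr_deriv ?_
  have hcancel : f (t s) * (deriv f (t s) / f (t s)) = deriv f (t s) := mul_div_cancel₀ _ hfs
  linear_combination (-(cos (σ s) * sin (σ s))) * hcancel

/-- First integral of the constant geodesic curvature system (Proposition 1.1):
along any solution of `t' = cos σ`, `σ' = h − (f'(t)/f(t)) sin σ`, the quantity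
`f(t) sin σ − h ∫_c^t f` is constant. -/
theorem stmt_0 (f : ℝ → ℝ) (hf : ContDiff ℝ 1 f) (hfpos : ∀ x, 0 < f x)
    (h c : ℝ) (t σ : ℝ → ℝ) (ht : Differentiable ℝ t) (hσ : Differentiable ℝ σ)
    (heq1 : ∀ s, deriv t s = Real.cos (σ s))
    (heq2 : ∀ s, deriv σ s = h - (deriv f (t s) / f (t s)) * Real.sin (σ s)) :
    ∃ k : ℝ, ∀ s : ℝ,
      f (t s) * Real.sin (σ s) - h * (∫ ξ in c..(t s), f ξ) = k := by
  have hderiv (s : ℝ) :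
      HasDerivAt (fun s => f (t s) * sin (σ s) - h * ∫ ξ in c..(t s), f ξ) 0 s :=
    hasDerivAt_firstIntegral_eq_zero (hf.differentiable one_ne_zero) (hfpos (t s)).ne'
      (heq1 s ▸ (ht s).hasDerivAt) (heq2 s ▸ (hσ s).hasDerivAt)
  exact ⟨_, fun s => is_const_of_deriv_eq_zero (fun s => (hderiv s).differentiableAt)
    (fun s => (hderiv s).deriv) s 0⟩
end

section
/- Let f : ℝ → ℝ be a C² function with f(x) > 0 for all x, let h ∈ ℝ, and let t, σ : ℝ → ℝ be C¹ functions satisfying, for all s, t'(s) = cos σ(s) and σ'(s) = h − (f'(t(s))/f(t(s)))·sin σ(s). If cos σ(s₀) = 0 for some s₀ ∈ ℝ (i.e. s₀ is a critical point of t), then for all s ∈ ℝ one has t(s₀ + s) = t(s₀ − s), sin σ(s₀ + s) = sin σ(s₀ − s), and cos σ(s₀ + s) = −cos σ(s₀ − s). -/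
/-!
Write `F(t, σ) = (cos σ, h - (f'(t)/f(t)) sin σ)`, a `C¹` autonomous vector field, so that
`s ↦ (t(s), σ(s))` is an integral curve of `F`. If `cos a = 0` then `cos (2a - σ) = -cos σ` and
`sin (2a - σ) = sin σ`, so reversing time and reflecting `σ` across `a` maps integral curves to
integral curves: with `a = σ(s₀)`, `s ↦ (t(2s₀ - s), 2a - σ(2s₀ - s))` is one, and it passes through
`(t(s₀), σ(s₀))` at `s = s₀`. By uniqueness of integral curves of a locally Lipschitz field the two
curves coincide, which is the claimed symmetry.
-/

open Set Filter Topology Real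

theorem ODE_solution_unique_univ_of_contDiff {E : Type*} [NormedAddCommGroup E] [NormedSpace ℝ E]
    {F : E → E} (hF : ContDiff ℝ 1 F) {X Y : ℝ → E}
    (hX : ∀ u, HasDerivAt X (F (X u)) u) (hY : ∀ u, HasDerivAt Y (F (Y u)) u)
    {u₀ : ℝ} (h₀ : X u₀ = Y u₀) : X = Y := by
  have hXc : Continuous X := continuous_iff_continuousAt.2 fun u => (hX u).continuousAt
  have hYc : Continuous Y := continuous_iff_continuousAt.2 fun u => (hY u).continuousAt
  suffices {u | X u = Y u} = univ from funext (eq_univ_iff_forall.1 this)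
  refine IsClopen.eq_univ ⟨isClosed_eq hXc hYc, isOpen_iff_mem_nhds.2 fun u (hu : X u = Y u) => ?_⟩
    ⟨u₀, h₀⟩
  obtain ⟨K, s, hs, hK⟩ := (hF.contDiffAt (x := X u)).exists_lipschitzOnWith
  have hXs : ∀ᶠ v in 𝓝 u, X v ∈ s := hXc.continuousAt.preimage_mem_nhds hs
  have hYs : ∀ᶠ v in 𝓝 u, Y v ∈ s := hYc.continuousAt.preimage_mem_nhds (hu ▸ hs)
  exact ODE_solution_unique_of_eventually (v := fun _ => F) (Eventually.of_forall fun _ => hK)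
    (hXs.mono fun v hv => ⟨hX v, hv⟩) (hYs.mono fun v hv => ⟨hY v, hv⟩) hu

lemma cos_two_mul_sub_of_cos_eq_zero {a : ℝ} (ha : cos a = 0) (x : ℝ) :
    cos (2 * a - x) = -cos x := by
  simp [cos_sub, cos_two_mul, sin_two_mul, ha]

lemma sin_two_mul_sub_of_cos_eq_zero {a : ℝ} (ha : cos a = 0) (x : ℝ) :
    sin (2 * a - x) = sin x := by
  simp [sin_sub, cos_two_mul, sin_two_mul, ha]

noncomputable def curvatureField (f : ℝ → ℝ) (h : ℝ) (p : ℝ × ℝ) : ℝ × ℝ :=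
  (cos p.2, h - deriv f p.1 / f p.1 * sin p.2)

section curvatureField

variable {f : ℝ → ℝ} {h : ℝ}

lemma contDiff_curvatureField (hf : ContDiff ℝ 2 f) (hf₀ : ∀ x, f x ≠ 0) :
    ContDiff ℝ 1 (curvatureField f h) := by
  have hf' : ContDiff ℝ 1 (deriv f) := hf.iterate_deriv' 1 1
  refine contDiff_cos.comp contDiff_snd |>.prodMk <| contDiff_const.sub <|
    ((hf'.div (hf.of_le one_le_two) hf₀).comp contDiff_fst).mul (contDiff_sin.comp contDiff_snd)

variable {t σ : ℝ → ℝ}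

lemma hasDerivAt_curvatureField
    (ht : ∀ u, HasDerivAt t (cos (σ u)) u)
    (hσ : ∀ u, HasDerivAt σ (h - deriv f (t u) / f (t u) * sin (σ u)) u) (u : ℝ) :
    HasDerivAt (fun u => (t u, σ u)) (curvatureField f h (t u, σ u)) u :=
  (ht u).prodMk (hσ u)

lemma hasDerivAt_curvatureField_reflect
    (ht : ∀ u, HasDerivAt t (cos (σ u)) u)
    (hσ : ∀ u, HasDerivAt σ (h - deriv f (t u) / f (t u) * sin (σ u)) u)
    {a : ℝ} (ha : cos a = 0) (c u : ℝ) :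
    HasDerivAt (fun u => (t (c - u), 2 * a - σ (c - u)))
      (curvatureField f h (t (c - u), 2 * a - σ (c - u))) u := by
  have hc : HasDerivAt (fun u => c - u) (-1) u := (hasDerivAt_id u).const_sub c
  simp only [curvatureField, cos_two_mul_sub_of_cos_eq_zero ha, sin_two_mul_sub_of_cos_eq_zero ha]
  convert ((ht (c - u)).comp u hc).prodMk (((hσ (c - u)).comp u hc).const_sub (2 * a)) using 2 <;>
    simp

end curvatureField

/-- A constant geodesic curvature curve is symmetric with respect to any
critical point of its `t`-coordinate (Remark 1.2). -/
theorem stmt_1 (f : ℝ → ℝ) (hf : ContDiff ℝ 2 f) (hfpos : ∀ x, 0 < f x) (h : ℝ)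
    (t σ : ℝ → ℝ) (ht : ContDiff ℝ 1 t) (hσ : ContDiff ℝ 1 σ)
    (heq1 : ∀ s, deriv t s = Real.cos (σ s))
    (heq2 : ∀ s, deriv σ s = h - (deriv f (t s) / f (t s)) * Real.sin (σ s))
    (s₀ : ℝ) (hcrit : Real.cos (σ s₀) = 0) :
    ∀ s : ℝ, t (s₀ + s) = t (s₀ - s) ∧
      Real.sin (σ (s₀ + s)) = Real.sin (σ (s₀ - s)) ∧
      Real.cos (σ (s₀ + s)) = -Real.cos (σ (s₀ - s)) := by
  have ht' : ∀ u, HasDerivAt t (cos (σ u)) u := fun u =>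
    heq1 u ▸ (ht.differentiable one_ne_zero u).hasDerivAt
  have hσ' : ∀ u, HasDerivAt σ (h - deriv f (t u) / f (t u) * sin (σ u)) u := fun u =>
    heq2 u ▸ (hσ.differentiable one_ne_zero u).hasDerivAt
  have hsymm := ODE_solution_unique_univ_of_contDiff
    (contDiff_curvatureField hf fun x => (hfpos x).ne')
    (hasDerivAt_curvatureField ht' hσ') (hasDerivAt_curvatureField_reflect ht' hσ' hcrit (2 * s₀))
    (u₀ := s₀) (by ext <;> simp [two_mul])
  intro s
  obtain ⟨ht_symm, hσ_symm⟩ := Prod.ext_iff.1 (congrFun hsymm (s₀ + s))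
  simp only [show 2 * s₀ - (s₀ + s) = s₀ - s by ring] at ht_symm hσ_symm
  exact ⟨ht_symm, by rw [hσ_symm, sin_two_mul_sub_of_cos_eq_zero hcrit],
    by rw [hσ_symm, cos_two_mul_sub_of_cos_eq_zero hcrit]⟩
end

section
/- Let t₀ > 0 and let f : [−t₀, t₀] → ℝ be a C², even, positive function with f'(t₀) = 0. Define K(t) = −f''(t)/f(t), and assume K is monotone nonincreasing on [0, t₀], K(0) > 0 and K(t₀) < 0. Then f'(t) < 0 for every t ∈ (0, t₀); in particular f is strictly decreasing on (0, t₀) and the geodesic curvature h(t) = f'(t)/f(t) is strictly negative on (0, t₀). -/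
/-! Since `f > 0`, the sign of `f''` is opposite to that of `K`, and `f'` vanishes at both ends
(at `0` by evenness). Fix `t ∈ (0, t₀)`. If `K t < 0`, then `K < 0` on `[t, t₀]`, so `f'` is
strictly increasing there and `f' t < f' t₀ = 0`. If `K t ≥ 0`, then `K ≥ 0` on `[0, t]`, so `f'`
is antitone there, and `f''(0) < 0` forces `f'` below `f' 0 = 0` just to the right of `0`. -/

open Set Filter Topology

/-- The Gauss curvature `K = -f'' / f` of the metric `dt² + f(t)² dθ²`. -/
noncomputable def profileCurvature (f : ℝ → ℝ) (t : ℝ) : ℝ :=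
  -deriv (deriv f) t / f t

section profileCurvature

variable {f : ℝ → ℝ} {t : ℝ}

lemma profileCurvature_pos_iff (hf : 0 < f t) :
    0 < profileCurvature f t ↔ deriv (deriv f) t < 0 := by
  rw [profileCurvature, div_pos_iff_of_pos_right hf, neg_pos]

lemma profileCurvature_nonneg_iff (hf : 0 < f t) :
    0 ≤ profileCurvature f t ↔ deriv (deriv f) t ≤ 0 := by
  rw [profileCurvature, le_div_iff₀ hf, zero_mul, neg_nonneg]

lemma profileCurvature_neg_iff (hf : 0 < f t) :
    profileCurvature f t < 0 ↔ 0 < deriv (deriv f) t := by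
  rw [profileCurvature, div_lt_iff₀ hf, zero_mul, neg_lt_zero]

end profileCurvature

lemma deriv_zero_of_even {f : ℝ → ℝ} (heven : ∀ t, f (-t) = f t) : deriv f 0 = 0 := by
  have h := deriv_comp_neg f 0
  rw [funext heven, neg_zero] at h
  linarith

lemma lt_of_deriv_neg_left_of_deriv_nonpos {g : ℝ → ℝ} {a b : ℝ} (hab : a < b)
    (hg : Differentiable ℝ g) (ha : deriv g a < 0) (hnonpos : ∀ x ∈ Ioo a b, deriv g x ≤ 0) :
    g b < g a := by
  have hslope : ∀ᶠ x in 𝓝[>] a, slope g a x < 0 :=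
    ((hasDerivAt_iff_tendsto_slope.mp (hg a).hasDerivAt).mono_left
      (nhdsGT_le_nhdsNE a)).eventually (eventually_lt_nhds ha)
  obtain ⟨s, hs_slope, has, hsb⟩ := (hslope.and (Ioo_mem_nhdsGT hab)).exists
  have hgs : g s < g a := (slope_neg_iff_of_le has.le).mp hs_slope
  have hanti : AntitoneOn g (Icc s b) := by
    refine antitoneOn_of_deriv_nonpos (convex_Icc s b) hg.continuous.continuousOn
      hg.differentiableOn fun x hx => hnonpos x ?_
    rw [interior_Icc] at hx
    exact ⟨has.trans hx.1, hx.2⟩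
  exact (hanti ⟨le_rfl, hsb.le⟩ ⟨hsb.le, le_rfl⟩ hsb.le).trans_lt hgs

lemma deriv_neg_of_profileCurvature_antitoneOn {f : ℝ → ℝ} {t₀ : ℝ}
    (hf' : Differentiable ℝ (deriv f)) (hfpos : ∀ t ∈ Icc 0 t₀, 0 < f t)
    (hf'0 : deriv f 0 = 0) (hf't₀ : deriv f t₀ = 0)
    (hK : AntitoneOn (profileCurvature f) (Icc 0 t₀)) (hK0 : 0 < profileCurvature f 0) :
    ∀ t ∈ Ioo 0 t₀, deriv f t < 0 := by
  rintro t ⟨ht0, htt₀⟩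
  have mem_Icc {x : ℝ} (h0 : 0 ≤ x) (h1 : x ≤ t₀) : x ∈ Icc 0 t₀ := ⟨h0, h1⟩
  rcases le_or_gt 0 (profileCurvature f t) with hKt | hKt
  · rw [← hf'0]
    refine lt_of_deriv_neg_left_of_deriv_nonpos ht0 hf'
      ((profileCurvature_pos_iff (hfpos 0 (mem_Icc le_rfl (ht0.le.trans htt₀.le)))).mp hK0)
      fun x hx => ?_
    have hx₀ : x ∈ Icc 0 t₀ := mem_Icc hx.1.le (hx.2.trans htt₀).le
    exact (profileCurvature_nonneg_iff (hfpos x hx₀)).mp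
      (hKt.trans (hK hx₀ (mem_Icc ht0.le htt₀.le) hx.2.le))
  · have hmono : StrictMonoOn (deriv f) (Icc t t₀) := by
      refine strictMonoOn_of_deriv_pos (convex_Icc t t₀) hf'.continuous.continuousOn
        fun x hx => ?_
      rw [interior_Icc] at hx
      have hx₀ : x ∈ Icc 0 t₀ := mem_Icc (ht0.trans hx.1).le hx.2.le
      exact (profileCurvature_neg_iff (hfpos x hx₀)).mp
        ((hK (mem_Icc ht0.le htt₀.le) hx₀ hx.1.le).trans_lt hKt)
    rw [← hf't₀]
    exact hmono ⟨le_rfl, htt₀.le⟩ ⟨htt₀.le, le_rfl⟩ htt₀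

theorem stmt_5_general (t₀ : ℝ) (f : ℝ → ℝ) (hf : ContDiff ℝ 2 f)
    (hfpos : ∀ t ∈ Set.Icc (-t₀) t₀, 0 < f t)
    (heven : ∀ t, f (-t) = f t) (hft₀ : deriv f t₀ = 0)
    (hK : AntitoneOn (fun t => -(deriv (deriv f) t) / f t) (Set.Icc 0 t₀))
    (hK0 : 0 < -(deriv (deriv f) 0) / f 0) :
    (∀ t ∈ Set.Ioo 0 t₀, deriv f t < 0) ∧
    StrictAntiOn f (Set.Ioo 0 t₀) ∧
    (∀ t ∈ Set.Ioo 0 t₀, deriv f t / f t < 0) := by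
  have hfpos' : ∀ t ∈ Icc 0 t₀, 0 < f t := fun t ht =>
    hfpos t ⟨(neg_nonpos.mpr (ht.1.trans ht.2)).trans ht.1, ht.2⟩
  have hderiv_neg := deriv_neg_of_profileCurvature_antitoneOn hf.differentiable_deriv_two hfpos'
    (deriv_zero_of_even heven) hft₀ hK hK0
  refine ⟨hderiv_neg, ?_, fun t ht => div_neg_of_neg_of_pos (hderiv_neg t ht)
    (hfpos' t (Ioo_subset_Icc_self ht))⟩
  refine strictAntiOn_of_deriv_neg (convex_Ioo 0 t₀)
    hf.continuous.continuousOn fun x hx => hderiv_neg x ?_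
  rwa [interior_Ioo] at hx

/-- For a rotationally symmetric torus profile `f` (even, positive, `f'(t₀) = 0`)
with Gauss curvature `K = −f''/f` nonincreasing on `[0, t₀]`, `K(0) > 0` and
`K(t₀) < 0`, the profile satisfies `f' < 0` on `(0, t₀)`: `f` is strictly
decreasing there and the geodesic curvature `h = f'/f` is strictly negative. -/
theorem stmt_5 (t₀ : ℝ) (ht₀ : 0 < t₀) (f : ℝ → ℝ) (hf : ContDiff ℝ 2 f)
    (hfpos : ∀ t ∈ Set.Icc (-t₀) t₀, 0 < f t)
    (heven : ∀ t, f (-t) = f t) (hft₀ : deriv f t₀ = 0)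
    (hK : AntitoneOn (fun t => -(deriv (deriv f) t) / f t) (Set.Icc 0 t₀))
    (hK0 : 0 < -(deriv (deriv f) 0) / f 0)
    (hKt₀ : -(deriv (deriv f) t₀) / f t₀ < 0) :
    (∀ t ∈ Set.Ioo 0 t₀, deriv f t < 0) ∧
    StrictAntiOn f (Set.Ioo 0 t₀) ∧
    (∀ t ∈ Set.Ioo 0 t₀, deriv f t / f t < 0) :=
  stmt_5_general t₀ f hf hfpos heven hft₀ hK hK0
end

section
/- Let L₁, L₂ > 0 and c₁, c₂ ∈ ℝ. Then the inequality ∫₀^{L₁}(u₁'(s)² − c₁·u₁(s)²) ds + ∫₀^{L₂}(u₂'(s)² − c₂·u₂(s)²) ds ≥ 0 holds for every pair of C¹ functions u₁, u₂ : ℝ → ℝ with uᵢ Lᵢ-periodic and ∫₀^{L₁} u₁ + ∫₀^{L₂} u₂ = 0, if and only if the three conditions c₁ ≤ 4π²/L₁², c₂ ≤ 4π²/L₂², and c₁/L₁ + c₂/L₂ ≤ 0 all hold. -/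
/-!
Wirtinger's inequality, proved through Parseval's identity (the Fourier coefficients of `u'` are
`2πin/L` times those of `u`, and the zeroth one vanishes when `u` has mean zero), shows that a
single circle is stable iff `c ≤ 4π²/L²`, with `sin (2πs/L)` as the extremal test function.
Splitting off the mean `m = (∫ u)/L` sharpens this to `indexForm L c u ≥ -c (∫ u)² / L` for
every periodic `u`. When `∫ u₁ = -∫ u₂` the two lower bounds add up to `-(∫ u₁)² (c₁/L₁ + c₂/L₂)`,
and the constant pair `(L₂, -L₁)` shows that the sign condition is also necessary.
-/

open MeasureTheory Real Set intervalIntegral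
open scoped Interval

theorem ContinuousOn.memLp_two_restrict_Ioc {E : Type*} [NormedAddCommGroup E] {a b : ℝ}
    {f : ℝ → E} (hf : ContinuousOn f [[a, b]]) : MemLp f 2 (volume.restrict (Ioc a b)) := by
  have hsub : Ioc a b ⊆ [[a, b]] := Ioc_subset_Icc_self.trans Icc_subset_uIcc
  refine (memLp_two_iff_integrable_sq_norm
    ((hf.mono hsub).aestronglyMeasurable measurableSet_Ioc)).2 ?_
  exact (hf.norm.pow 2).integrableOn_uIcc.mono_set hsub

section Fourier

open Complex

theorem fourierCoeffOn_deriv_eq_of_eq {a b : ℝ} (hab : a < b) {f f' : ℝ → ℂ} {n : ℤ} (hn : n ≠ 0)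
    (hf : ∀ x ∈ [[a, b]], HasDerivAt f (f' x) x) (hf' : IntervalIntegrable f' volume a b)
    (hper : f b = f a) :
    fourierCoeffOn hab f' n = 2 * π * I * n / (b - a) * fourierCoeffOn hab f n := by
  have h := fourierCoeffOn_of_hasDerivAt hab hn hf hf'
  rw [hper, sub_self, mul_zero, zero_sub] at h
  have hba : ((b - a : ℝ) : ℂ) ≠ 0 := ofReal_ne_zero.2 (sub_pos.2 hab).ne'
  have hn' : (n : ℂ) ≠ 0 := Int.cast_ne_zero.2 hn
  rw [h]
  push_cast at hba ⊢
  field_simp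

theorem fourierCoeffOn_zero {a b : ℝ} (hab : a < b) (f : ℝ → ℂ) :
    fourierCoeffOn hab f 0 = (1 / (b - a) : ℝ) • ∫ x in a..b, f x := by
  simp [fourierCoeffOn_eq_integral]

theorem two_pi_div_sq_mul_norm_fourierCoeffOn_sq_le {a b : ℝ} (hab : a < b) {f f' : ℝ → ℂ}
    (hf : ∀ x ∈ [[a, b]], HasDerivAt f (f' x) x) (hf' : IntervalIntegrable f' volume a b)
    (hper : f b = f a) (hmean : ∫ x in a..b, f x = 0) (n : ℤ) :
    (2 * π / (b - a)) ^ 2 * ‖fourierCoeffOn hab f n‖ ^ 2 ≤ ‖fourierCoeffOn hab f' n‖ ^ 2 := by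
  rcases eq_or_ne n 0 with rfl | hn
  · rw [fourierCoeffOn_zero hab f, hmean]
    simp
  have hba : 0 < b - a := sub_pos.2 hab
  have hnorm : ‖2 * π * I * n / (b - a)‖ = 2 * π / (b - a) * |(n : ℝ)| := by
    rw [← ofReal_sub, norm_div, norm_real, Real.norm_of_nonneg hba.le]
    simp only [Complex.norm_mul, Complex.norm_ofNat, norm_real, norm_eq_abs, abs_of_pos pi_pos,
      norm_I, mul_one, norm_intCast]
    ring
  have hn1 : 1 ≤ |(n : ℝ)| := by exact_mod_cast Int.one_le_abs hn
  rw [fourierCoeffOn_deriv_eq_of_eq hab hn hf hf' hper, norm_mul, hnorm, mul_pow, mul_pow]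
  gcongr
  exact le_mul_of_one_le_right (by positivity) (one_le_pow₀ hn1)

theorem wirtinger_inequality_complex {a b : ℝ} (hab : a < b) {f f' : ℝ → ℂ}
    (hf : ∀ x ∈ [[a, b]], HasDerivAt f (f' x) x) (hf' : ContinuousOn f' [[a, b]])
    (hper : f b = f a) (hmean : ∫ x in a..b, f x = 0) :
    4 * π ^ 2 / (b - a) ^ 2 * ∫ x in a..b, ‖f x‖ ^ 2 ≤ ∫ x in a..b, ‖f' x‖ ^ 2 := by
  have hcont : ContinuousOn f [[a, b]] := fun x hx => (hf x hx).continuousAt.continuousWithinAt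
  have hsum := hasSum_sq_fourierCoeffOn hab hcont.memLp_two_restrict_Ioc
  have hsum' := hasSum_sq_fourierCoeffOn hab hf'.memLp_two_restrict_Ioc
  have hle := hasSum_le
    (two_pi_div_sq_mul_norm_fourierCoeffOn_sq_le hab hf hf'.intervalIntegrable hper hmean)
    (hsum.mul_left _) hsum'
  have hba : 0 < b - a := sub_pos.2 hab
  rw [smul_eq_mul, smul_eq_mul, mul_left_comm] at hle
  calc 4 * π ^ 2 / (b - a) ^ 2 * ∫ x in a..b, ‖f x‖ ^ 2
      = (2 * π / (b - a)) ^ 2 * ∫ x in a..b, ‖f x‖ ^ 2 := by rw [div_pow]; ring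
    _ ≤ ∫ x in a..b, ‖f' x‖ ^ 2 := le_of_mul_le_mul_left hle (inv_pos.2 hba)

end Fourier

theorem wirtinger_inequality {a b : ℝ} (hab : a < b) {u u' : ℝ → ℝ}
    (hu : ∀ x ∈ [[a, b]], HasDerivAt u (u' x) x) (hu' : ContinuousOn u' [[a, b]])
    (hper : u b = u a) (hmean : ∫ x in a..b, u x = 0) :
    4 * π ^ 2 / (b - a) ^ 2 * ∫ x in a..b, u x ^ 2 ≤ ∫ x in a..b, u' x ^ 2 := by
  have h := wirtinger_inequality_complex hab (f := fun x => (u x : ℂ))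
    (fun x hx => (hu x hx).ofReal_comp) (Complex.continuous_ofReal.comp_continuousOn hu')
    (by simp only [hper]) (by rw [intervalIntegral.integral_ofReal, hmean, Complex.ofReal_zero])
  simpa only [Complex.norm_real, Real.norm_eq_abs, sq_abs] using h

noncomputable def indexForm (L c : ℝ) (u : ℝ → ℝ) : ℝ :=
  ∫ s in (0 : ℝ)..L, (deriv u s ^ 2 - c * u s ^ 2)

def StableCircle (L c : ℝ) : Prop :=
  ∀ u : ℝ → ℝ, ContDiff ℝ 1 u → Function.Periodic u L → ∫ s in (0 : ℝ)..L, u s = 0 →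
    0 ≤ indexForm L c u

section indexForm

variable {L c : ℝ} {u : ℝ → ℝ}

theorem indexForm_eq_sub (hu : ContDiff ℝ 1 u) :
    indexForm L c u = (∫ s in (0 : ℝ)..L, deriv u s ^ 2) - c * ∫ s in (0 : ℝ)..L, u s ^ 2 := by
  rw [indexForm, intervalIntegral.integral_sub, intervalIntegral.integral_const_mul]
  · exact ((hu.continuous_deriv le_rfl).pow 2).intervalIntegrable _ _
  · exact (continuous_const.mul (hu.continuous.pow 2)).intervalIntegrable _ _

theorem indexForm_add_const (hu : ContDiff ℝ 1 u) (m : ℝ) :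
    indexForm L c (fun x => u x + m) =
      indexForm L c u - c * (2 * m * (∫ s in (0 : ℝ)..L, u s) + m ^ 2 * L) := by
  have hcu := hu.continuous
  rw [indexForm_eq_sub hu, indexForm_eq_sub (hu.add contDiff_const)]
  simp only [deriv_add_const, add_sq]
  rw [intervalIntegral.integral_add, intervalIntegral.integral_add,
    intervalIntegral.integral_mul_const, intervalIntegral.integral_const_mul,
    intervalIntegral.integral_const, smul_eq_mul, sub_zero]
  · ring
  all_goals exact Continuous.intervalIntegrable (by fun_prop) _ _

theorem indexForm_const (a : ℝ) : indexForm L c (fun _ => a) = -(c * a ^ 2 * L) := by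
  simp only [indexForm, deriv_const', intervalIntegral.integral_const, smul_eq_mul, sub_zero]
  ring

theorem indexForm_nonneg_of_integral_eq_zero (hL : 0 < L) (hc : c ≤ 4 * π ^ 2 / L ^ 2)
    (hu : ContDiff ℝ 1 u) (hper : u L = u 0) (hmean : ∫ s in (0 : ℝ)..L, u s = 0) :
    0 ≤ indexForm L c u := by
  have hW := wirtinger_inequality hL (fun x _ => (hu.differentiable one_ne_zero x).hasDerivAt)
    (hu.continuous_deriv le_rfl).continuousOn hper hmean
  rw [sub_zero] at hW
  have hsq : 0 ≤ ∫ s in (0 : ℝ)..L, u s ^ 2 :=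
    intervalIntegral.integral_nonneg hL.le fun s _ => sq_nonneg _
  rw [indexForm_eq_sub hu]
  linarith [mul_le_mul_of_nonneg_right hc hsq]

theorem neg_mul_sq_integral_div_le_indexForm (hL : 0 < L) (hc : c ≤ 4 * π ^ 2 / L ^ 2)
    (hu : ContDiff ℝ 1 u) (hper : u L = u 0) :
    -(c * (∫ s in (0 : ℝ)..L, u s) ^ 2 / L) ≤ indexForm L c u := by
  set m := (∫ s in (0 : ℝ)..L, u s) / L with hm
  have hv : ContDiff ℝ 1 (fun x => u x - m) := hu.sub contDiff_const
  have hmean : ∫ s in (0 : ℝ)..L, (u s - m) = 0 := by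
    rw [intervalIntegral.integral_sub (hu.continuous.intervalIntegrable _ _)
      intervalIntegrable_const, intervalIntegral.integral_const, smul_eq_mul, sub_zero,
      mul_div_cancel₀ _ hL.ne', sub_self]
  have h := indexForm_add_const (L := L) (c := c) hv m
  simp only [sub_add_cancel, hmean] at h
  have hv_nonneg := indexForm_nonneg_of_integral_eq_zero hL hc hv (by simp only [hper]) hmean
  have hmL : m ^ 2 * L = (∫ s in (0 : ℝ)..L, u s) ^ 2 / L := by
    rw [hm]
    field_simp
  rw [h, mul_zero, zero_add, hmL, mul_div_assoc]
  linarith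

theorem integral_sin_two_pi_div_mul (hL : L ≠ 0) :
    ∫ s in (0 : ℝ)..L, sin (2 * π / L * s) = 0 := by
  have hk : 2 * π / L ≠ 0 := div_ne_zero (by positivity) hL
  rw [intervalIntegral.integral_comp_mul_left (fun x => sin x) hk, mul_zero,
    div_mul_cancel₀ _ hL, integral_sin, cos_two_pi, cos_zero, sub_self, smul_zero]

theorem integral_sin_two_pi_div_mul_sq (hL : L ≠ 0) :
    ∫ s in (0 : ℝ)..L, sin (2 * π / L * s) ^ 2 = L / 2 := by
  have hk : 2 * π / L ≠ 0 := div_ne_zero (by positivity) hL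
  rw [intervalIntegral.integral_comp_mul_left (fun x => sin x ^ 2) hk, mul_zero,
    div_mul_cancel₀ _ hL, integral_sin_sq, sin_two_pi, sin_zero, smul_eq_mul]
  field_simp
  ring

theorem deriv_sin_const_mul (k : ℝ) :
    deriv (fun s => sin (k * s)) = fun s => k * cos (k * s) := by
  funext s
  simpa [mul_comm] using ((hasDerivAt_id s).const_mul k).sin.deriv

theorem indexForm_sin (hL : L ≠ 0) :
    indexForm L c (fun s => sin (2 * π / L * s)) = (4 * π ^ 2 / L ^ 2 - c) * (L / 2) := by
  have hu : ContDiff ℝ 1 (fun s => sin (2 * π / L * s)) := by fun_prop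
  rw [indexForm_eq_sub hu, deriv_sin_const_mul]
  simp only [mul_pow, cos_sq']
  rw [intervalIntegral.integral_const_mul, intervalIntegral.integral_sub intervalIntegrable_const
    (Continuous.intervalIntegrable (by fun_prop) _ _), integral_sin_two_pi_div_mul_sq hL,
    intervalIntegral.integral_const, smul_eq_mul, sub_zero]
  field_simp
  ring

theorem stableCircle_iff (hL : 0 < L) : StableCircle L c ↔ c ≤ 4 * π ^ 2 / L ^ 2 := by
  refine ⟨fun h => ?_, fun hc u hu hper hmean =>
    indexForm_nonneg_of_integral_eq_zero hL hc hu (by simpa using hper 0) hmean⟩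
  have hk : 2 * π / L ≠ 0 := by positivity
  have := h (fun s => sin (2 * π / L * s)) (by fun_prop)
    (by simpa [hk] using Real.sin_periodic.const_mul (2 * π / L))
    (integral_sin_two_pi_div_mul hL.ne')
  rw [indexForm_sin hL.ne'] at this
  exact sub_nonneg.1 ((mul_nonneg_iff_of_pos_right (by positivity)).1 this)

end indexForm

/-- Analytic content of Lemma 1.7: the index form of two circles of revolution
of lengths `L₁, L₂` with potentials `c₁, c₂` is nonnegative on all pairs of
periodic `C¹` functions with total mean zero iff each circle is stable
(`cᵢ ≤ 4π²/Lᵢ²`) and `c₁/L₁ + c₂/L₂ ≤ 0`. -/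
theorem stmt_7 (L₁ L₂ : ℝ) (hL₁ : 0 < L₁) (hL₂ : 0 < L₂) (c₁ c₂ : ℝ) :
    (∀ u₁ u₂ : ℝ → ℝ, ContDiff ℝ 1 u₁ → ContDiff ℝ 1 u₂ →
      Function.Periodic u₁ L₁ → Function.Periodic u₂ L₂ →
      (∫ s in (0:ℝ)..L₁, u₁ s) + (∫ s in (0:ℝ)..L₂, u₂ s) = 0 →
      0 ≤ (∫ s in (0:ℝ)..L₁, ((deriv u₁ s) ^ 2 - c₁ * (u₁ s) ^ 2)) +
          (∫ s in (0:ℝ)..L₂, ((deriv u₂ s) ^ 2 - c₂ * (u₂ s) ^ 2))) ↔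
    (c₁ ≤ 4 * Real.pi ^ 2 / L₁ ^ 2 ∧ c₂ ≤ 4 * Real.pi ^ 2 / L₂ ^ 2 ∧
      c₁ / L₁ + c₂ / L₂ ≤ 0) := by
  constructor
  · intro H
    have h₁ : StableCircle L₁ c₁ := fun u hu hper hmean => by
      have h : 0 ≤ indexForm L₁ c₁ u + indexForm L₂ c₂ (fun _ => 0) :=
        H u _ hu contDiff_const hper (fun _ => rfl) (by simp [hmean])
      simpa [indexForm_const] using h
    have h₂ : StableCircle L₂ c₂ := fun u hu hper hmean => by
      have h : 0 ≤ indexForm L₁ c₁ (fun _ => 0) + indexForm L₂ c₂ u :=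
        H _ u contDiff_const hu (fun _ => rfl) hper (by simp [hmean])
      simpa [indexForm_const] using h
    have hconst : 0 ≤ indexForm L₁ c₁ (fun _ => L₂) + indexForm L₂ c₂ (fun _ => -L₁) :=
      H _ _ contDiff_const contDiff_const (fun _ => rfl) (fun _ => rfl) (by simp; ring)
    rw [indexForm_const, indexForm_const] at hconst
    refine ⟨(stableCircle_iff hL₁).1 h₁, (stableCircle_iff hL₂).1 h₂, ?_⟩
    rw [div_add_div _ _ hL₁.ne' hL₂.ne']
    refine div_nonpos_of_nonpos_of_nonneg ?_ (by positivity)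
    nlinarith [mul_pos hL₁ hL₂]
  · rintro ⟨h₁, h₂, h₃⟩ u₁ u₂ hu₁ hu₂ hp₁ hp₂ hmean
    have b₁ := neg_mul_sq_integral_div_le_indexForm hL₁ h₁ hu₁ (by simpa using hp₁ 0)
    have b₂ := neg_mul_sq_integral_div_le_indexForm hL₂ h₂ hu₂ (by simpa using hp₂ 0)
    rw [eq_neg_of_add_eq_zero_right hmean] at b₂
    have hsum : c₁ * (∫ s in (0:ℝ)..L₁, u₁ s) ^ 2 / L₁ +
        c₂ * (-∫ s in (0:ℝ)..L₁, u₁ s) ^ 2 / L₂ =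
          (∫ s in (0:ℝ)..L₁, u₁ s) ^ 2 * (c₁ / L₁ + c₂ / L₂) := by ring
    show 0 ≤ indexForm L₁ c₁ u₁ + indexForm L₂ c₂ u₂
    linarith [mul_nonpos_of_nonneg_of_nonpos (sq_nonneg (∫ s in (0:ℝ)..L₁, u₁ s)) h₃]
end

section
/- Let L > 0 and c ∈ ℝ. Then the inequality ∫₀^{L}(u₁'(s)² − c·u₁(s)²) ds + ∫₀^{L}(u₂'(s)² − c·u₂(s)²) ds ≥ 0 holds for every pair of C¹ functions u₁, u₂ : ℝ → ℝ that are L-periodic and satisfy ∫₀^{L} u₁ + ∫₀^{L} u₂ = 0, if and only if c ≤ 0. -/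
/-- Symmetric-annulus case of Lemma 1.7: the index form of two circles of the
same length `L` and same potential `c` is nonnegative on all pairs of periodic
`C¹` functions with total mean zero iff `c ≤ 0`. -/
theorem stmt_8 (L : ℝ) (hL : 0 < L) (c : ℝ) :
    (∀ u₁ u₂ : ℝ → ℝ, ContDiff ℝ 1 u₁ → ContDiff ℝ 1 u₂ →
      Function.Periodic u₁ L → Function.Periodic u₂ L →
      (∫ s in (0:ℝ)..L, u₁ s) + (∫ s in (0:ℝ)..L, u₂ s) = 0 →
      0 ≤ (∫ s in (0:ℝ)..L, ((deriv u₁ s) ^ 2 - c * (u₁ s) ^ 2)) +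
          (∫ s in (0:ℝ)..L, ((deriv u₂ s) ^ 2 - c * (u₂ s) ^ 2))) ↔
    c ≤ 0 := by
  constructor
  · intro H
    have h := H (fun _ => 1) (fun _ => -1) contDiff_const contDiff_const
      (fun x => rfl) (fun x => rfl) (by simp)
    simp only [deriv_const'] at h
    rw [intervalIntegral.integral_const, intervalIntegral.integral_const] at h
    simp at h
    nlinarith
  · intro hc u₁ u₂ h₁ h₂ _ _ _
    have key : ∀ u : ℝ → ℝ, 0 ≤ ∫ s in (0:ℝ)..L, ((deriv u s) ^ 2 - c * (u s) ^ 2) := by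
      intro u
      apply intervalIntegral.integral_nonneg hL.le
      intro x _
      nlinarith [sq_nonneg (deriv u x), sq_nonneg (u x), mul_nonneg (neg_nonneg.2 hc) (sq_nonneg (u x))]
    linarith [key u₁, key u₂]
end

section
/- Let 0 < r < a, set f(t) = a + r·cos(t/r), K(t) = −f''(t)/f(t), t̃ = πr/2, and h̃ = f'(t̃)/f(t̃). Then 3·K(t̃)·(1 − f(t̃)) + 3·f(t̃)²·(h̃·K'(t̃) − K''(t̃)) + 5·f(t̃)⁴·K'(t̃)² = (5a² + 9r²)/r⁴, which is strictly positive. -/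
/-!
At `t̃ = πr/2` the cosine vanishes and the sine is `1`, so `f = a`, `f' = -1`, `f'' = 0`.
Writing `K = N / f` with `N = cos(t/r)/r`, the quotient rule with `N(t̃) = N''(t̃) = 0` gives
`K(t̃) = 0`, `K'(t̃) = -1/(r²a)` and `K''(t̃) = -2/(r²a²)`; substituting yields `(5a² + 9r²)/r⁴`.
-/

open Real

theorem hasDerivAt_deriv_div {N D N' D' : ℝ → ℝ} {x N'' D'' : ℝ}
    (hN : ∀ t, HasDerivAt N (N' t) t) (hD : ∀ t, HasDerivAt D (D' t) t) (hD0 : ∀ t, D t ≠ 0)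
    (hN' : HasDerivAt N' N'' x) (hD' : HasDerivAt D' D'' x) :
    HasDerivAt (deriv fun t => N t / D t)
      (N'' / D x - 2 * N' x * D' x / D x ^ 2 - N x * D'' / D x ^ 2 +
        2 * N x * D' x ^ 2 / D x ^ 3) x := by
  have hderiv : deriv (fun t => N t / D t) = fun t => (N' t * D t - N t * D' t) / D t ^ 2 :=
    funext fun t => ((hN t).fun_div (hD t) (hD0 t)).deriv
  rw [hderiv]
  refine (((hN'.fun_mul (hD x)).fun_sub ((hN x).fun_mul hD')).fun_div ((hD x).fun_pow 2)
    (pow_ne_zero 2 (hD0 x))).congr_deriv ?_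
  have := hD0 x
  field_simp
  norm_num
  ring

theorem hasDerivAt_cos_div (r t : ℝ) :
    HasDerivAt (fun t => cos (t / r)) (-sin (t / r) / r) t := by
  simpa [div_eq_mul_inv] using ((hasDerivAt_id t).div_const r).cos

theorem hasDerivAt_sin_div (r t : ℝ) :
    HasDerivAt (fun t => sin (t / r)) (cos (t / r) / r) t := by
  simpa [div_eq_mul_inv] using ((hasDerivAt_id t).div_const r).sin

theorem hasDerivAt_cos_div_div (r t : ℝ) :
    HasDerivAt (fun t => cos (t / r) / r) (-sin (t / r) / r ^ 2) t := by
  refine ((hasDerivAt_cos_div r t).div_const r).congr_deriv ?_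
  ring

theorem hasDerivAt_torus_profile (a : ℝ) {r : ℝ} (hr : r ≠ 0) (t : ℝ) :
    HasDerivAt (fun t => a + r * cos (t / r)) (-sin (t / r)) t :=
  (((hasDerivAt_cos_div r t).const_mul r).const_add a).congr_deriv
    (mul_div_cancel₀ _ hr)

/-- On the standard torus `f(t) = a + r cos(t/r)`, at `t̃ = πr/2` with
`K = −f''/f` and `h̃ = f'(t̃)/f(t̃)`, the period-derivative quantity of
Lemma 3.5 equals `(5a² + 9r²)/r⁴ > 0`. -/
theorem stmt_11 (a r : ℝ) (hr : 0 < r) (hra : r < a)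
    (f K : ℝ → ℝ) (hf : ∀ t, f t = a + r * Real.cos (t / r))
    (hK : ∀ t, K t = -(deriv (deriv f) t) / f t) :
    3 * K (Real.pi * r / 2) * (1 - f (Real.pi * r / 2)) +
      3 * f (Real.pi * r / 2) ^ 2 *
        ((deriv f (Real.pi * r / 2) / f (Real.pi * r / 2)) * deriv K (Real.pi * r / 2) -
          deriv (deriv K) (Real.pi * r / 2)) +
      5 * f (Real.pi * r / 2) ^ 4 * (deriv K (Real.pi * r / 2)) ^ 2 =
      (5 * a ^ 2 + 9 * r ^ 2) / r ^ 4 ∧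
    0 < (5 * a ^ 2 + 9 * r ^ 2) / r ^ 4 := by
  have hf' : ∀ t, HasDerivAt f (-sin (t / r)) t := by
    rw [funext hf]; exact hasDerivAt_torus_profile a hr.ne'
  have hf'' : ∀ t, HasDerivAt (fun t => -sin (t / r)) (-(cos (t / r) / r)) t :=
    fun t => (hasDerivAt_sin_div r t).neg
  have hf0 : ∀ t, f t ≠ 0 := fun t => by nlinarith [hf t, neg_one_le_cos (t / r)]
  have hKN : K = fun t => cos (t / r) / r / f t := by
    funext t
    rw [hK, funext fun t => (hf' t).deriv, (hf'' t).deriv, neg_neg]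
  have hK' : ∀ t, HasDerivAt K _ t := fun t =>
    hKN ▸ (hasDerivAt_cos_div_div r t).fun_div (hf' t) (hf0 t)
  have hK'' := hKN ▸ hasDerivAt_deriv_div (hasDerivAt_cos_div_div r) hf' hf0
    ((hasDerivAt_sin_div r (π * r / 2)).neg.div_const (r ^ 2)) (hf'' (π * r / 2))
  have hquarter : π * r / 2 / r = π / 2 := by field_simp
  rw [hK''.deriv, (hf' _).deriv, funext fun t => (hK' t).deriv]
  simp only [hKN, hf, hquarter, cos_pi_div_two, sin_pi_div_two, mul_zero, add_zero]
  have ha : a ≠ 0 := by linarith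
  refine ⟨?_, by positivity⟩
  field_simp
  ring
end

section
/- Let a > 0, 0 < t* < π/(2a), and b > a·tan(a·t*). Define c > 0 by c² = cos²(a t*)/a² − sin²(a t*)/b², and d = b·t* + arccosh(cos(a t*)/(a c)). Then: (i) cos²(a t*)/a² − sin²(a t*)/b² > 0, so c is well defined; (ii) cos(a t*)/(a c) ≥ 1, so d is well defined; (iii) c·cosh(d − b·t*) = cos(a t*)/a; and (iv) b·c·sinh(d − b·t*) = sin(a t*). Consequently the function f defined by f(t) = cos(a t)/a for t ∈ [0, t*] and f(t) = c·cosh(d − b t) for t ∈ [t*, d/b] is C¹ at t = t*. -/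
/-- Inverse hyperbolic cosine, for `x ≥ 1`. -/
noncomputable def arcosh (x : ℝ) : ℝ := Real.log (x + Real.sqrt (x ^ 2 - 1))

/-!
At `t*` the spherical profile has value `X = cos(at*)/a` and slope `-sin(at*) = -bY` with
`Y = sin(at*)/b`. The condition `b > a tan(at*)` says exactly `0 ≤ Y < X`, so the hyperbola
`c² = X² - Y²` has a positive point `c`, and `(X, Y) = (c cosh s, c sinh s)` for `s = arcosh(X/c)`;
`d` is chosen so that `d - bt* = s`. Matching value and slope of two `C¹` pieces makes the
pasted function `C¹`.
-/

open Set Filter Topology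
open Real hiding arcosh

lemma arcosh_eq_real_arcosh : arcosh = Real.arcosh := rfl

section Pasting

variable {E : Type*} [NormedAddCommGroup E] [NormedSpace ℝ E]

theorem hasDerivAt_ite_le {f g f' g' : ℝ → E} {x₀ : ℝ} (hf : ∀ t, HasDerivAt f (f' t) t)
    (hg : ∀ t, HasDerivAt g (g' t) t) (h₀ : f x₀ = g x₀) (h₁ : f' x₀ = g' x₀) (t : ℝ) :
    HasDerivAt (fun s => if s ≤ x₀ then f s else g s) (if t ≤ x₀ then f' t else g' t) t := by
  rcases lt_trichotomy t x₀ with ht | rfl | ht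
  · have hev : (fun s => if s ≤ x₀ then f s else g s) =ᶠ[𝓝 t] f := by
      filter_upwards [Iic_mem_nhds ht] with s hs
      simp [mem_Iic.mp hs]
    simpa [ht.le] using (hf t).congr_of_eventuallyEq hev
  · have hleft : HasDerivWithinAt (fun s => if s ≤ t then f s else g s) (f' t) (Iic t) t :=
      (hf t).hasDerivWithinAt.congr_of_mem (fun s hs => by simp [mem_Iic.mp hs]) self_mem_Iic
    have hright : HasDerivWithinAt (fun s => if s ≤ t then f s else g s) (f' t) (Ici t) t := by
      refine h₁ ▸ (hg t).hasDerivWithinAt.congr_of_mem (fun s hs => ?_) self_mem_Ici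
      rcases (mem_Ici.mp hs).eq_or_lt with rfl | hlt
      · simp [h₀]
      · simp [not_le.mpr hlt]
    simpa [Iic_union_Ici] using hleft.union hright
  · have hev : (fun s => if s ≤ x₀ then f s else g s) =ᶠ[𝓝 t] g := by
      filter_upwards [Ioi_mem_nhds ht] with s hs
      simp [not_le.mpr (mem_Ioi.mp hs)]
    simpa [not_le.mpr ht] using (hg t).congr_of_eventuallyEq hev

theorem ContDiff.ite_le {f g : ℝ → E} {x₀ : ℝ} (hf : ContDiff ℝ 1 f) (hg : ContDiff ℝ 1 g)
    (h₀ : f x₀ = g x₀) (h₁ : deriv f x₀ = deriv g x₀) :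
    ContDiff ℝ 1 (fun t => if t ≤ x₀ then f t else g t) := by
  obtain ⟨hfd, hfc⟩ := contDiff_one_iff_deriv.mp hf
  obtain ⟨hgd, hgc⟩ := contDiff_one_iff_deriv.mp hg
  have hderiv := hasDerivAt_ite_le (fun t => (hfd t).hasDerivAt) (fun t => (hgd t).hasDerivAt)
    h₀ h₁
  refine contDiff_one_iff_deriv.mpr ⟨fun t => (hderiv t).differentiableAt, ?_⟩
  rw [show deriv _ = _ from funext fun t => (hderiv t).deriv]
  exact hfc.if_le hgc continuous_id continuous_const fun t ht => ht ▸ h₁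

end Pasting

theorem one_le_div_and_cosh_sinh_arcosh {X Y c : ℝ} (hX : 0 ≤ X) (hY : 0 ≤ Y) (hc : 0 < c)
    (hcXY : c ^ 2 = X ^ 2 - Y ^ 2) :
    1 ≤ X / c ∧ c * cosh (arcosh (X / c)) = X ∧ c * sinh (arcosh (X / c)) = Y := by
  have hcX : c ≤ X := abs_le_of_sq_le_sq' (by nlinarith) hX |>.2
  have hone : 1 ≤ X / c := (one_le_div hc).mpr hcX
  have hsq : (X / c) ^ 2 - 1 = (Y / c) ^ 2 := by
    field_simp
    linarith
  refine ⟨hone, ?_, ?_⟩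
  · rw [arcosh_eq_real_arcosh, Real.cosh_arcosh hone]
    field_simp
  · rw [arcosh_eq_real_arcosh, Real.sinh_arcosh hone, hsq, sqrt_sq (by positivity)]
    field_simp

theorem hasDerivAt_cos_mul_div {a : ℝ} (ha : a ≠ 0) (t : ℝ) :
    HasDerivAt (fun t => cos (a * t) / a) (-sin (a * t)) t := by
  have := (((hasDerivAt_id' t).const_mul a).cos).div_const a
  exact this.congr_deriv (by field_simp)

theorem hasDerivAt_const_mul_cosh_sub_mul (b c d t : ℝ) :
    HasDerivAt (fun t => c * cosh (d - b * t)) (-(b * c) * sinh (d - b * t)) t := by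
  have := ((((hasDerivAt_id' t).const_mul b).const_sub d).cosh).const_mul c
  exact this.congr_deriv (by ring)

theorem sin_div_pos_and_lt_cos_div {a b θ : ℝ} (ha : 0 < a) (hθ₀ : 0 < θ) (hθ : θ < π / 2)
    (hb : a * tan θ < b) : 0 < sin θ / b ∧ sin θ / b < cos θ / a := by
  have hcos : 0 < cos θ := cos_pos_of_mem_Ioo ⟨by linarith, hθ⟩
  have hsin : 0 < sin θ := sin_pos_of_pos_of_lt_pi hθ₀ (by linarith)
  have hb₀ : 0 < b := (mul_pos ha (tan_pos_of_pos_of_lt_pi_div_two hθ₀ hθ)).trans hb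
  rw [tan_eq_sin_div_cos, ← mul_div_assoc, div_lt_iff₀ hcos] at hb
  refine ⟨by positivity, ?_⟩
  rw [div_lt_div_iff₀ hb₀ ha]
  linarith

/-- Example 2 (construction of the torus from a sphere and hyperbolic annuli):
with `0 < t* < π/(2a)` and `b > a tan(a t*)`, the matching constants
`c² = cos²(at*)/a² − sin²(at*)/b²` and `d = bt* + arcosh(cos(at*)/(ac))` are
well defined, satisfy `c cosh(d − bt*) = cos(at*)/a` and
`bc sinh(d − bt*) = sin(at*)`, and consequently the pasted profile is `C¹`
at `t*`. -/
theorem stmt_12 (a tstar b : ℝ) (ha : 0 < a) (ht1 : 0 < tstar)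
    (ht2 : tstar < Real.pi / (2 * a)) (hb : a * Real.tan (a * tstar) < b)
    (c : ℝ) (hcpos : 0 < c)
    (hc : c ^ 2 = Real.cos (a * tstar) ^ 2 / a ^ 2 - Real.sin (a * tstar) ^ 2 / b ^ 2)
    (d : ℝ) (hd : d = b * tstar + arcosh (Real.cos (a * tstar) / (a * c))) :
    0 < Real.cos (a * tstar) ^ 2 / a ^ 2 - Real.sin (a * tstar) ^ 2 / b ^ 2 ∧
    1 ≤ Real.cos (a * tstar) / (a * c) ∧
    c * Real.cosh (d - b * tstar) = Real.cos (a * tstar) / a ∧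
    b * c * Real.sinh (d - b * tstar) = Real.sin (a * tstar) ∧
    ContDiffAt ℝ 1
      (fun t => if t ≤ tstar then Real.cos (a * t) / a else c * Real.cosh (d - b * t))
      tstar := by
  have hθ : a * tstar < π / 2 := by
    rw [lt_div_iff₀ (by positivity)] at ht2
    linarith
  obtain ⟨hY, hYX⟩ := sin_div_pos_and_lt_cos_div ha (by positivity) hθ hb
  rw [← div_pow, ← div_pow] at hc ⊢
  obtain ⟨hone, hcosh, hsinh⟩ := one_le_div_and_cosh_sinh_arcosh (hY.trans hYX).le hY.le hcpos hc
  rw [div_div] at hone hcosh hsinh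
  have hs : d - b * tstar = arcosh (cos (a * tstar) / (a * c)) := by rw [hd]; ring
  have hvalue : c * cosh (d - b * tstar) = cos (a * tstar) / a := hs ▸ hcosh
  have hslope : b * c * sinh (d - b * tstar) = sin (a * tstar) := by
    have hb₀ : b ≠ 0 := by rintro rfl; simp at hY
    rw [mul_assoc, hs, hsinh]
    field_simp
  refine ⟨sub_pos.mpr (pow_lt_pow_left₀ hYX hY.le two_ne_zero), hone, hvalue, hslope, ?_⟩
  refine (ContDiff.ite_le (by fun_prop) (by fun_prop) hvalue.symm ?_).contDiffAt
  rw [(hasDerivAt_cos_mul_div ha.ne' tstar).deriv,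
    (hasDerivAt_const_mul_cosh_sub_mul b c d tstar).deriv]
  linarith
end
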